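/- arXiv:1102.1256 — 3 statements merged into one kernel-verified Lean document; each statement's English description precedes it below -/
import Mathlib

section
/- Verification Theorem, part (iii), first case: If the reverse switching costs of the optimal strategy are integrable, i.e. E[Σ_{k≥1} g_{u*_k u*_{k−1}}(τ*_k,X_{τ*_k})1_{[τ*_k<T]}] < +∞, then the optimal strategy is almost surely finite: P({ω : τ*_n(ω) < T for all n ≥ 1}) = 0. -/
open MeasureTheory Set Filter
open scoped ENNReal

noncomputable section

namespace Switching

/-- Maximum of `f` over the indices `j ≠ i` (the inter-connected obstacle). -/
def maxNe {m : ℕ} (i : Fin m) (f : Fin m → ℝ) : ℝ :=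
  ⨆ j : {j : Fin m // j ≠ i}, f (j : Fin m)

variable {Ω : Type*}

/-- The payoff functional `∫_t^τ ψ_i(s,X_s) ds + max_{j≠i}(-g_{ij}(τ,X_τ) + Y^j_τ) 1_{[τ<T]}`
appearing in the Snell envelope characterization of the value processes. -/
def reward {k m : ℕ} (T : ℝ) (X : ℝ → Ω → EuclideanSpace ℝ (Fin k))
    (ψ : Fin m → ℝ → EuclideanSpace ℝ (Fin k) → ℝ)
    (g : Fin m → Fin m → ℝ → EuclideanSpace ℝ (Fin k) → ℝ)
    (Y : Fin m → ℝ → Ω → ℝ)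
    (i : Fin m) (t : ℝ) (τ : Ω → ℝ) (ω : Ω) : ℝ :=
  (∫ s in Ioc t (τ ω), ψ i s (X s ω)) +
    indicator {ω' | τ ω' < T}
      (fun ω' => maxNe i fun j => -(g i j (τ ω') (X (τ ω') ω')) + Y j (τ ω') ω') ω

/-- `Y` is the system of Snell-envelope value processes:  for every mode `i` and every
`t ∈ [0,T]`, `Y^i_t` is (a.s.) the least `F_t`-measurable random variable dominating
`E[∫_t^τ ψ_i(s,X_s) ds + max_{j≠i}(-g_{ij}(τ,X_τ)+Y^j_τ) 1_{[τ<T]} | F_t]` over all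
stopping times `t ≤ τ ≤ T`. -/
def SnellSystem {m0 : MeasurableSpace Ω} {k m : ℕ} (T : ℝ) (μ : Measure Ω)
    (ℱ : Filtration ℝ m0) (X : ℝ → Ω → EuclideanSpace ℝ (Fin k))
    (ψ : Fin m → ℝ → EuclideanSpace ℝ (Fin k) → ℝ)
    (g : Fin m → Fin m → ℝ → EuclideanSpace ℝ (Fin k) → ℝ)
    (Y : Fin m → ℝ → Ω → ℝ) : Prop :=
  ∀ i : Fin m, ∀ t ∈ Icc (0 : ℝ) T,
    (∀ τ : Ω → ℝ, IsStoppingTime ℱ (fun ω => (τ ω : WithTop ℝ)) → (∀ ω, τ ω ∈ Icc t T) →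
      ∀ᵐ ω ∂μ, (μ[reward T X ψ g Y i t τ | ℱ t]) ω ≤ Y i t ω) ∧
    (∀ Z : Ω → ℝ, Measurable[ℱ t] Z →
      (∀ τ : Ω → ℝ, IsStoppingTime ℱ (fun ω => (τ ω : WithTop ℝ)) → (∀ ω, τ ω ∈ Icc t T) →
        ∀ᵐ ω ∂μ, (μ[reward T X ψ g Y i t τ | ℱ t]) ω ≤ Z ω) →
      ∀ᵐ ω ∂μ, Y i t ω ≤ Z ω)

/-- An admissible switching strategy: a nondecreasing sequence of `[0,T]`-valued stopping
times `τ_n` (with the convention `τ_0 = 0`) together with `F_{τ_n}`-measurable mode choices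
`ξ_n` (`ξ_0` being the initial mode). -/
structure Strategy {m0 : MeasurableSpace Ω} (T : ℝ) (ℱ : Filtration ℝ m0) (m : ℕ) where
  τ : ℕ → Ω → ℝ
  ξ : ℕ → Ω → Fin m
  τ_zero : ∀ ω, τ 0 ω = 0
  τ_mono : ∀ ω, Monotone fun n => τ n ω
  τ_mem : ∀ n ω, τ n ω ∈ Icc (0 : ℝ) T
  τ_stop : ∀ n, IsStoppingTime ℱ (fun ω => (τ n ω : WithTop ℝ))
  ξ_meas : ∀ n j, ∀ i : ℝ, MeasurableSet[ℱ i] ({ω | ξ n ω = j} ∩ {ω | τ n ω ≤ i})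

variable {m0 : MeasurableSpace Ω} {T : ℝ} {ℱ : Filtration ℝ m0} {k m : ℕ}

/-- The mode indicator process `u_t` of a strategy: `u_t = ξ_n` on `(τ_n, τ_{n+1}]`
(and `u_t = ξ_0` on `[0, τ_1]`). -/
def Strategy.mode (S : Strategy T ℱ m) (t : ℝ) (ω : Ω) : Fin m :=
  S.ξ (sSup {n | S.τ n ω < t}) ω

/-- The `n`-th switching cost `g_{ξ_{n-1} ξ_n}(τ_n, X_{τ_n}) 1_{[τ_n < T]}` (indexed so that
`cost g X n` is the cost of the `(n+1)`-st switch). -/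
def Strategy.cost (S : Strategy T ℱ m)
    (g : Fin m → Fin m → ℝ → EuclideanSpace ℝ (Fin k) → ℝ)
    (X : ℝ → Ω → EuclideanSpace ℝ (Fin k)) (n : ℕ) (ω : Ω) : ℝ :=
  indicator {ω' | S.τ (n + 1) ω' < T}
    (fun ω' => g (S.ξ n ω') (S.ξ (n + 1) ω') (S.τ (n + 1) ω') (X (S.τ (n + 1) ω') ω')) ω

/-- The reverse switching cost `g_{ξ_n ξ_{n-1}}(τ_n, X_{τ_n}) 1_{[τ_n < T]}`. -/
def Strategy.revCost (S : Strategy T ℱ m)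
    (g : Fin m → Fin m → ℝ → EuclideanSpace ℝ (Fin k) → ℝ)
    (X : ℝ → Ω → EuclideanSpace ℝ (Fin k)) (n : ℕ) (ω : Ω) : ℝ :=
  indicator {ω' | S.τ (n + 1) ω' < T}
    (fun ω' => g (S.ξ (n + 1) ω') (S.ξ n ω') (S.τ (n + 1) ω') (X (S.τ (n + 1) ω') ω')) ω

/-- Total switching cost, as an extended nonnegative real (so that infinite total cost is
represented faithfully). -/
def Strategy.costENN (S : Strategy T ℱ m)
    (g : Fin m → Fin m → ℝ → EuclideanSpace ℝ (Fin k) → ℝ)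
    (X : ℝ → Ω → EuclideanSpace ℝ (Fin k)) (ω : Ω) : ℝ≥0∞ :=
  ∑' n : ℕ, ENNReal.ofReal (S.cost g X n ω)

/-- The expected total profit `J(δ,ξ)` of a strategy. -/
def profit (μ : Measure Ω) (X : ℝ → Ω → EuclideanSpace ℝ (Fin k))
    (ψ : Fin m → ℝ → EuclideanSpace ℝ (Fin k) → ℝ)
    (g : Fin m → Fin m → ℝ → EuclideanSpace ℝ (Fin k) → ℝ)
    (S : Strategy T ℱ m) : ℝ :=
  ∫ ω, ((∫ s in Ioc (0 : ℝ) T, ψ (S.mode s ω) s (X s ω)) - ∑' n : ℕ, S.cost g X n ω) ∂μ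

/-- The candidate optimal strategy `(δ*, u*)` built from the value processes `Y`:
`τ*_{n+1}` is the first time after `τ*_n` at which the current value process touches its
inter-connected obstacle (truncated at `T`), and the new mode attains the maximum there. -/
structure OptStrat (T : ℝ) (ℱ : Filtration ℝ m0)
    (X : ℝ → Ω → EuclideanSpace ℝ (Fin k))
    (g : Fin m → Fin m → ℝ → EuclideanSpace ℝ (Fin k) → ℝ)
    (Y : Fin m → ℝ → Ω → ℝ) (i0 : Fin m) extends Strategy T ℱ m where
  start : ∀ ω, ξ 0 ω = i0
  hitting : ∀ n ω, τ (n + 1) ω =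
    min (sInf {s : ℝ | τ n ω ≤ s ∧
      Y (ξ n ω) s ω = maxNe (ξ n ω) fun j => -(g (ξ n ω) j s (X s ω)) + Y j s ω}) T
  switch_ne : ∀ n ω, τ (n + 1) ω < T → ξ (n + 1) ω ≠ ξ n ω
  switch_attain : ∀ n ω, τ (n + 1) ω < T →
    Y (ξ n ω) (τ (n + 1) ω) ω =
      -(g (ξ n ω) (ξ (n + 1) ω) (τ (n + 1) ω) (X (τ (n + 1) ω) ω)) +
        Y (ξ (n + 1) ω) (τ (n + 1) ω) ω

/-- The standing hypotheses of the optimal multi-modes switching problem. -/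
structure Hyps {m0 : MeasurableSpace Ω} {k m : ℕ} (T α : ℝ) (μ : Measure Ω)
    (ℱ : Filtration ℝ m0) (X : ℝ → Ω → EuclideanSpace ℝ (Fin k))
    (ψ : Fin m → ℝ → EuclideanSpace ℝ (Fin k) → ℝ)
    (g : Fin m → Fin m → ℝ → EuclideanSpace ℝ (Fin k) → ℝ)
    (Y : Fin m → ℝ → Ω → ℝ) : Prop where
  prob : IsProbabilityMeasure μ
  right_cont : ∀ t : ℝ, ℱ t = ⨅ s : {s : ℝ // t < s}, ℱ (s : ℝ)
  X_cont : ∀ ω, ContinuousOn (fun t => X t ω) (Icc 0 T)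
  X_adapted : ∀ t : ℝ, Measurable[ℱ t] (X t)
  ψ_cont : ∀ i, ContinuousOn (fun p : ℝ × EuclideanSpace ℝ (Fin k) => ψ i p.1 p.2)
    (Icc 0 T ×ˢ univ)
  g_cont : ∀ i j, ContinuousOn (fun p : ℝ × EuclideanSpace ℝ (Fin k) => g i j p.1 p.2)
    (Icc 0 T ×ˢ univ)
  ψ_int : ∀ i, Integrable (fun ω => ∫ s in Icc (0 : ℝ) T, (ψ i s (X s ω)) ^ 2) μ
  g_int : ∀ i j, Integrable (fun ω => ⨆ t : Icc (0 : ℝ) T, (g i j (t : ℝ) (X (t : ℝ) ω)) ^ 2) μ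
  Y_int : ∀ i, Integrable (fun ω => ⨆ t : Icc (0 : ℝ) T, (Y i (t : ℝ) ω) ^ 2) μ
  g_diag : ∀ i, ∀ t ∈ Icc (0 : ℝ) T, ∀ x, g i i t x = 0
  g_nonneg : ∀ i j, ∀ t ∈ Icc (0 : ℝ) T, ∀ x, 0 ≤ g i j t x
  g_triangle : ∀ i j l, j ≠ i → l ≠ i → l ≠ j → ∀ t ∈ Icc (0 : ℝ) T, ∀ x,
    g i l t x < g i j t x + g j l t x
  g_alpha : ∀ i j, i ≠ j → ∀ t ∈ Icc (0 : ℝ) T, ∀ x, α < g i j t x + g j i t x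
  Y_cont : ∀ i ω, ContinuousOn (fun t => Y i t ω) (Icc 0 T)
  Y_adapted : ∀ i, ∀ t : ℝ, Measurable[ℱ t] (Y i t)
  Y_T : ∀ i ω, Y i T ω = 0
  snell : SnellSystem T μ ℱ X ψ g Y

open scoped Topology

/-! Suppose all switching times of the optimal strategy stay below `T`. They increase to some
`t ≤ T`, and by continuity every switch `i → j` made infinitely often satisfies
`g_{ij}(t, X_t) = Y^j_t - Y^i_t`. Since eventually every switch is of this kind, the nonnegative
costs are eventually the increments of the potential `Y^·_t` along the mode sequence; a
nondecreasing sequence with finitely many values is eventually constant, so eventually two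
successive switches cost nothing, which the strict triangle inequality and `α > 0` forbid. -/

lemma eventually_frequently_transition {ι : Type*} [Finite ι] (ξ : ℕ → ι) :
    ∀ᶠ n in atTop, ∃ᶠ m in atTop, ξ m = ξ n ∧ ξ (m + 1) = ξ (n + 1) := by
  have h : ∀ p : ι × ι, ∀ᶠ n in atTop,
      (ξ n, ξ (n + 1)) = p → ∃ᶠ m in atTop, ξ m = p.1 ∧ ξ (m + 1) = p.2 := by
    intro p
    by_cases hp : ∃ᶠ m in atTop, ξ m = p.1 ∧ ξ (m + 1) = p.2
    · exact Eventually.of_forall fun _ _ => hp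
    · filter_upwards [not_frequently.1 hp] with n hn hnp
      exact absurd (Prod.ext_iff.1 hnp) hn
  filter_upwards [eventually_all.2 h] with n hn using hn _ rfl

lemma eventually_succ_eq_of_finite_range {α : Type*} [PartialOrder α] {a : ℕ → α}
    (hfin : (range a).Finite) (hmono : ∀ᶠ n in atTop, a n ≤ a (n + 1)) :
    ∀ᶠ n in atTop, a (n + 1) = a n := by
  obtain ⟨N, hN⟩ := eventually_atTop.1 hmono
  have hmon : MonotoneOn a {n | N ≤ n} := monotoneOn_nat_Ici_of_le_succ hN
  obtain ⟨n₀, hn₀, hmax⟩ := Finite.exists_maximalFor' a {n | N ≤ n}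
    (hfin.subset (image_subset_range _ _)) ⟨N, le_refl N⟩
  have hconst : ∀ n ≥ n₀, a n = a n₀ := fun n hn =>
    le_antisymm (hmax (hn₀.trans hn) (hmon hn₀ (hn₀.trans hn) hn))
      (hmon hn₀ (hn₀.trans hn) hn)
  filter_upwards [eventually_ge_atTop n₀] with n hn
  rw [hconst n hn, hconst (n + 1) (hn.trans n.le_succ)]

lemma eventually_cost_eq_zero {ι : Type*} [Finite ι] {ξ : ℕ → ι} {c : ι → ι → ℝ}
    (y : ι → ℝ) (hc : ∀ i j, 0 ≤ c i j)
    (hrec : ∀ i j, (∃ᶠ n in atTop, ξ n = i ∧ ξ (n + 1) = j) → c i j = y j - y i) :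
    ∀ᶠ n in atTop, c (ξ n) (ξ (n + 1)) = 0 := by
  have hpot : ∀ᶠ n in atTop, c (ξ n) (ξ (n + 1)) = y (ξ (n + 1)) - y (ξ n) :=
    (eventually_frequently_transition ξ).mono fun n hn => hrec _ _ hn
  have hconst : ∀ᶠ n in atTop, y (ξ (n + 1)) = y (ξ n) :=
    eventually_succ_eq_of_finite_range (a := y ∘ ξ)
      ((finite_range y).subset (range_comp_subset_range ξ y))
      (hpot.mono fun n hn => show y (ξ n) ≤ y (ξ (n + 1)) by linarith [hc (ξ n) (ξ (n + 1))])
  filter_upwards [hpot, hconst] with n hn hn'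
  rw [hn, hn', sub_self]

section

variable {X : ℝ → Ω → EuclideanSpace ℝ (Fin k)}
  {ψ : Fin m → ℝ → EuclideanSpace ℝ (Fin k) → ℝ}
  {g : Fin m → Fin m → ℝ → EuclideanSpace ℝ (Fin k) → ℝ} {Y : Fin m → ℝ → Ω → ℝ}
  {α : ℝ} {μ : Measure Ω}

lemma Hyps.two_switches_cost_pos (H : Hyps T α μ ℱ X ψ g Y) (hα : 0 < α) {t : ℝ}
    (ht : t ∈ Icc 0 T) (x : EuclideanSpace ℝ (Fin k)) {i j l : Fin m} (hji : j ≠ i)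
    (hlj : l ≠ j) : 0 < g i j t x + g j l t x := by
  by_cases hli : l = i
  · subst hli
    linarith [H.g_alpha l j hji.symm t ht x]
  · linarith [H.g_triangle i j l hji hli hlj t ht x, H.g_nonneg i l t ht x]

lemma OptStrat.switchCost_eq_of_frequently {i0 : Fin m} (H : Hyps T α μ ℱ X ψ g Y)
    (S : OptStrat T ℱ X g Y i0) {ω : Ω} (hω : ∀ n, S.τ (n + 1) ω < T) {t : ℝ}
    (hτ : Tendsto (fun n => S.τ n ω) atTop (𝓝 t)) {i j : Fin m}
    (hfreq : ∃ᶠ n in atTop, S.ξ n ω = i ∧ S.ξ (n + 1) ω = j) :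
    g i j t (X t ω) = Y j t ω - Y i t ω := by
  have ht : t ∈ Icc 0 T :=
    isClosed_Icc.mem_of_tendsto hτ (Eventually.of_forall fun n => S.τ_mem n ω)
  have hτ' : Tendsto (fun n => S.τ (n + 1) ω) atTop (𝓝[Icc 0 T] t) :=
    tendsto_nhdsWithin_iff.2
      ⟨hτ.comp (tendsto_add_atTop_nat 1), Eventually.of_forall fun n => S.τ_mem _ ω⟩
  have hg : ContinuousOn (fun s => g i j s (X s ω)) (Icc 0 T) :=
    (H.g_cont i j).comp (continuousOn_id.prodMk (H.X_cont ω)) fun s hs => ⟨hs, mem_univ _⟩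
  have hY : ContinuousOn (fun s => Y j s ω - Y i s ω) (Icc 0 T) :=
    (H.Y_cont j ω).sub (H.Y_cont i ω)
  refine tendsto_nhds_unique_of_frequently_eq ((hg t ht).tendsto.comp hτ')
    ((hY t ht).tendsto.comp hτ') (hfreq.mono ?_)
  rintro n ⟨rfl, rfl⟩
  have := S.switch_attain n ω (hω n)
  simp only [Function.comp_apply]
  linarith

lemma OptStrat.not_forall_switch_lt {i0 : Fin m} (H : Hyps T α μ ℱ X ψ g Y) (hα : 0 < α)
    (S : OptStrat T ℱ X g Y i0) (ω : Ω) : ¬∀ n, S.τ (n + 1) ω < T := by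
  intro hω
  have hbdd : BddAbove (range fun n => S.τ n ω) :=
    ⟨T, forall_mem_range.2 fun n => (S.τ_mem n ω).2⟩
  set t := ⨆ n, S.τ n ω
  have hτ : Tendsto (fun n => S.τ n ω) atTop (𝓝 t) := tendsto_atTop_ciSup (S.τ_mono ω) hbdd
  have ht : t ∈ Icc 0 T :=
    isClosed_Icc.mem_of_tendsto hτ (Eventually.of_forall fun n => S.τ_mem n ω)
  have hzero : ∀ᶠ n in atTop, g (S.ξ n ω) (S.ξ (n + 1) ω) t (X t ω) = 0 :=
    eventually_cost_eq_zero (fun i => Y i t ω) (fun i j => H.g_nonneg i j t ht _)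
      fun i j => S.switchCost_eq_of_frequently H hω hτ
  obtain ⟨n, hn, hn'⟩ := (hzero.and ((tendsto_add_atTop_nat 1).eventually hzero)).exists
  have := H.two_switches_cost_pos hα ht (X t ω) (S.switch_ne n ω (hω n))
    (S.switch_ne (n + 1) ω (hω (n + 1)))
  linarith

end

/-- **Verification Theorem, part (iii), first case.**  If the reverse switching costs of the
optimal strategy are integrable, i.e. `E[Σ_{k≥1} g_{u*_k u*_{k-1}}(τ*_k, X_{τ*_k})
1_{[τ*_k<T]}] < ∞`, then the optimal strategy is almost surely finite:
`P({ω : τ*_n(ω) < T for all n ≥ 1}) = 0`. -/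
theorem verification_theorem_part_iii_integrable_reverse_costs
    {Ω : Type*} {m0 : MeasurableSpace Ω} {k m : ℕ} {T α : ℝ}
    {μ : Measure Ω} {ℱ : Filtration ℝ m0}
    {X : ℝ → Ω → EuclideanSpace ℝ (Fin k)}
    {ψ : Fin m → ℝ → EuclideanSpace ℝ (Fin k) → ℝ}
    {g : Fin m → Fin m → ℝ → EuclideanSpace ℝ (Fin k) → ℝ}
    {Y : Fin m → ℝ → Ω → ℝ}
    (hα : 0 < α)
    (H : Hyps T α μ ℱ X ψ g Y)
    (i0 : Fin m)
    (S : OptStrat T ℱ X g Y i0) :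
    μ {ω | ∀ n : ℕ, S.τ (n + 1) ω < T} = 0 := by
  simp only [S.not_forall_switch_lt H hα, ofPred_false, measure_empty]

end Switching

end
end

section
/- Combinatorial switching-cost lemma: let I be a finite set with m ≥ 2 elements, α > 0, and g : I×I → ℝ satisfy g(i,i) = 0 for all i, g(i,j) ≥ 0 for all i,j, the strict triangle inequality g(i,j) + g(j,k) > g(i,k) whenever j ≠ i and k ≠ j, and g(i,j) + g(j,i) > α whenever i ≠ j. Then for every sequence u₀, u₁, …, u_m of m+1 elements of I with u_k ≠ u_{k−1} for every 1 ≤ k ≤ m, one has Σ_{k=1}^{m} g(u_{k−1}, u_k) > α. -/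
open Finset

/-- **Combinatorial switching-cost lemma.**  Let `I` be a finite set with `m ≥ 2` elements,
`α > 0`, and `g : I × I → ℝ` satisfy `g(i,i) = 0`, `g(i,j) ≥ 0`, the strict triangle
inequality `g(i,j) + g(j,l) > g(i,l)` whenever `j ≠ i` and `l ≠ j`, and
`g(i,j) + g(j,i) > α` whenever `i ≠ j`.  Then every sequence `u₀, u₁, …, u_m` of `m+1`
elements of `I` with `u_q ≠ u_{q-1}` for each `1 ≤ q ≤ m` satisfies
`Σ_{q=1}^{m} g(u_{q-1}, u_q) > α`. -/
theorem switching_cost_cycle_lemma {I : Type*} [Fintype I] {m : ℕ} (hm : 2 ≤ m)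
    (hcard : Fintype.card I = m) (α : ℝ) (hα : 0 < α) (g : I → I → ℝ)
    (hdiag : ∀ i, g i i = 0)
    (hnonneg : ∀ i j, 0 ≤ g i j)
    (htriangle : ∀ i j l, j ≠ i → l ≠ j → g i l < g i j + g j l)
    (hback : ∀ i j, i ≠ j → α < g i j + g j i)
    (u : ℕ → I) (hu : ∀ q : ℕ, 1 ≤ q → q ≤ m → u q ≠ u (q - 1)) :
    α < ∑ q ∈ Finset.range m, g (u q) (u (q + 1)) := by

  have hne : ∀ q, q < m → u (q+1) ≠ u q := by
    intro q hq
    have := hu (q+1) (by omega) (by omega)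
    simpa using this
  have chain : ∀ c, c ≤ m → ∀ a, a ≤ c →
      g (u a) (u c) ≤ ∑ q ∈ Finset.Ico a c, g (u q) (u (q + 1)) := by
    intro c
    induction c with
    | zero =>
      intro _ a ha
      have : a = 0 := Nat.le_zero.mp ha
      simp [this, hdiag]
    | succ c ih =>
      intro hc a ha
      rcases Nat.lt_or_ge a (c+1) with h | h
      · have ha' : a ≤ c := Nat.lt_succ_iff.mp h
        have h1 := ih (by omega) a ha'
        have h2 : g (u a) (u (c+1)) ≤ g (u a) (u c) + g (u c) (u (c+1)) := by
          by_cases hac : u c = u a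
          · rw [hac, hdiag]; simp [hac]
          · exact le_of_lt (htriangle (u a) (u c) (u (c+1)) hac (hne c (by omega)))
        rw [Finset.sum_Ico_succ_top ha']
        linarith
      · have : a = c + 1 := by omega
        simp [this, hdiag]
  -- pigeonhole
  obtain ⟨x, y, hxy, hxyeq⟩ :=
    Fintype.exists_ne_map_eq_of_card_lt (fun q : Fin (m+1) => u q) (by simp [hcard])
  -- wlog x < y
  obtain ⟨a, b, hab, habm, heq⟩ : ∃ a b : ℕ, a < b ∧ b ≤ m ∧ u a = u b := by
    rcases lt_or_gt_of_ne hxy with h | h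
    · exact ⟨x, y, h, by omega, hxyeq⟩
    · exact ⟨y, x, h, by omega, hxyeq.symm⟩
  have hab2 : a + 1 < b := by
    rcases Nat.lt_or_ge (a+1) b with h | h
    · exact h
    · exfalso
      have hb : b = a + 1 := by omega
      exact hne a (by omega) (hb ▸ heq.symm)
  have hstep : α < ∑ q ∈ Finset.Ico a b, g (u q) (u (q + 1)) := by
    have h1 : g (u (a+1)) (u b) ≤ ∑ q ∈ Finset.Ico (a+1) b, g (u q) (u (q + 1)) :=
      chain b habm (a+1) (by omega)
    have h2 : α < g (u a) (u (a+1)) + g (u (a+1)) (u b) := by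
      rw [heq]
      exact hback (u b) (u (a+1)) (fun hh => hne a (by omega) (heq ▸ hh.symm))
    have h3 : ∑ q ∈ Finset.Ico a b, g (u q) (u (q + 1))
        = g (u a) (u (a+1)) + ∑ q ∈ Finset.Ico (a+1) b, g (u q) (u (q + 1)) :=
      Finset.sum_eq_sum_Ico_succ_bot (by omega) _
    linarith
  have hsplit : ∑ q ∈ Finset.range m, g (u q) (u (q + 1))
      = ∑ q ∈ Finset.Ico 0 a, g (u q) (u (q + 1))
        + ∑ q ∈ Finset.Ico a b, g (u q) (u (q + 1))
        + ∑ q ∈ Finset.Ico b m, g (u q) (u (q + 1)) := by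
    rw [Finset.range_eq_Ico, ← Finset.sum_Ico_consecutive _ (by omega : (0:ℕ) ≤ b) habm,
      ← Finset.sum_Ico_consecutive _ (by omega : (0:ℕ) ≤ a) (by omega : a ≤ b)]
  have hp1 : 0 ≤ ∑ q ∈ Finset.Ico 0 a, g (u q) (u (q + 1)) :=
    Finset.sum_nonneg fun q _ => hnonneg _ _
  have hp2 : 0 ≤ ∑ q ∈ Finset.Ico b m, g (u q) (u (q + 1)) :=
    Finset.sum_nonneg fun q _ => hnonneg _ _
  linarith
end

section
/- Penalization/doubling-of-variables lemma (Step 1 of the uniqueness proof): fix R > 0, an integer γ ≥ 2, (t̄,x̄) ∈ (0,T)×ℝ^k with |x̄| < R, a real a, parameters θ, β, λ ∈ (0,1], and continuous functions u, w : [0,T]×ℝ^k → ℝ. For ε > 0 define Φ_ε(t,x,y) = u(t,x) − ((1−λ)w(t,y)+λa) − (1/(2ε))(|x−y|^{2γ} + |x−x̄|^{2γ} + (t−t̄)^{2γ}) − θ(|x|^{2γ+2}+|y|^{2γ+2}) + βt − λ/t on (0,T]×B̄_R×B̄_R, where B̄_R = {x ∈ ℝ^k : |x| ≤ R}. Suppose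 for each ε > 0 the point (t_ε,x_ε,y_ε) ∈ (0,T]×B̄_R×B̄_R is a maximum point of Φ_ε over (0,T]×B̄_R×B̄_R. Then the quantity (1/(2ε))(|x_ε−y_ε|^{2γ} + |x_ε−x̄|^{2γ} + (t_ε−t̄)^{2γ}) remains bounded as ε → 0, one has |x_ε−y_ε| → 0, |x_ε−x̄| → 0 and t_ε → t̄ as ε → 0, and consequently (1/(2ε))(|x_ε−y_ε|^{2γ} + |x_ε−x̄|^{2γ} + (t_ε−t̄)^{2γ}) → 0 as ε → 0. -/
open Set Filter Topology

noncomputable section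

/-- The penalized doubling-of-variables functional
`Φ_ε(t,x,y) = u(t,x) − ((1−λ)w(t,y)+λa) − (1/(2ε))(|x−y|^{2γ} + |x−x̄|^{2γ} + (t−t̄)^{2γ})
− θ(|x|^{2γ+2}+|y|^{2γ+2}) + βt − λ/t`. -/
def Phi {k : ℕ} (γ : ℕ) (u w : ℝ → EuclideanSpace ℝ (Fin k) → ℝ)
    (lam a θ β : ℝ) (tbar : ℝ) (xbar : EuclideanSpace ℝ (Fin k))
    (ε t : ℝ) (x y : EuclideanSpace ℝ (Fin k)) : ℝ :=
  u t x - ((1 - lam) * w t y + lam * a)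
    - (1 / (2 * ε)) * (‖x - y‖ ^ (2 * γ) + ‖x - xbar‖ ^ (2 * γ) + (t - tbar) ^ (2 * γ))
    - θ * (‖x‖ ^ (2 * γ + 2) + ‖y‖ ^ (2 * γ + 2))
    + β * t - lam / t

/-- **Penalization/doubling-of-variables lemma** (Step 1 of the uniqueness proof).  If for
every `ε > 0` the point `(t_ε, x_ε, y_ε) ∈ (0,T] × B̄_R × B̄_R` maximizes `Φ_ε` over
`(0,T] × B̄_R × B̄_R`, then the penalization term
`Q(ε) = (1/(2ε))(|x_ε−y_ε|^{2γ} + |x_ε−x̄|^{2γ} + (t_ε−t̄)^{2γ})` remains bounded as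
`ε → 0⁺`, one has `|x_ε−y_ε| → 0`, `|x_ε−x̄| → 0` and `t_ε → t̄` as `ε → 0⁺`, and
consequently `Q(ε) → 0` as `ε → 0⁺`. -/
theorem doubling_of_variables_lemma {k : ℕ} (hk : 1 ≤ k) (T R : ℝ) (hT : 0 < T) (hR : 0 < R)
    (γ : ℕ) (hγ : 2 ≤ γ)
    (tbar : ℝ) (xbar : EuclideanSpace ℝ (Fin k))
    (htbar : tbar ∈ Ioo (0 : ℝ) T) (hxbar : ‖xbar‖ < R)
    (a : ℝ) (θ β lam : ℝ)
    (hθ : θ ∈ Ioc (0 : ℝ) 1) (hβ : β ∈ Ioc (0 : ℝ) 1) (hlam : lam ∈ Ioc (0 : ℝ) 1)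
    (u w : ℝ → EuclideanSpace ℝ (Fin k) → ℝ)
    (hu : ContinuousOn (fun p : ℝ × EuclideanSpace ℝ (Fin k) => u p.1 p.2)
      (Icc 0 T ×ˢ univ))
    (hw : ContinuousOn (fun p : ℝ × EuclideanSpace ℝ (Fin k) => w p.1 p.2)
      (Icc 0 T ×ˢ univ))
    (tp : ℝ → ℝ) (xp yp : ℝ → EuclideanSpace ℝ (Fin k))
    (htp : ∀ ε > (0 : ℝ), tp ε ∈ Ioc (0 : ℝ) T)
    (hxp : ∀ ε > (0 : ℝ), ‖xp ε‖ ≤ R) (hyp : ∀ ε > (0 : ℝ), ‖yp ε‖ ≤ R)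
    (hmax : ∀ ε > (0 : ℝ), ∀ t ∈ Ioc (0 : ℝ) T, ∀ x y : EuclideanSpace ℝ (Fin k),
      ‖x‖ ≤ R → ‖y‖ ≤ R →
      Phi γ u w lam a θ β tbar xbar ε t x y ≤
        Phi γ u w lam a θ β tbar xbar ε (tp ε) (xp ε) (yp ε)) :
    (∃ M : ℝ, ∀ᶠ ε in 𝓝[>] (0 : ℝ),
      (1 / (2 * ε)) * (‖xp ε - yp ε‖ ^ (2 * γ) + ‖xp ε - xbar‖ ^ (2 * γ)
        + (tp ε - tbar) ^ (2 * γ)) ≤ M) ∧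
    Tendsto (fun ε => ‖xp ε - yp ε‖) (𝓝[>] (0 : ℝ)) (𝓝 0) ∧
    Tendsto (fun ε => ‖xp ε - xbar‖) (𝓝[>] (0 : ℝ)) (𝓝 0) ∧
    Tendsto tp (𝓝[>] (0 : ℝ)) (𝓝 tbar) ∧
    Tendsto (fun ε => (1 / (2 * ε)) * (‖xp ε - yp ε‖ ^ (2 * γ)
      + ‖xp ε - xbar‖ ^ (2 * γ) + (tp ε - tbar) ^ (2 * γ))) (𝓝[>] (0 : ℝ)) (𝓝 0) := by
  obtain ⟨htb0, htbT⟩ := htbar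
  obtain ⟨hθ0, -⟩ := hθ
  obtain ⟨hβ0, hβ1⟩ := hβ
  obtain ⟨hlam0, hlam1⟩ := hlam
  have h2γ : 2 * γ ≠ 0 := by omega
  -- key inequality from maximality, compared with the point (tbar, xbar, xbar)
  have key : ∀ ε > (0 : ℝ),
      (1 / (2 * ε)) * (‖xp ε - yp ε‖ ^ (2 * γ) + ‖xp ε - xbar‖ ^ (2 * γ)
        + (tp ε - tbar) ^ (2 * γ))
      ≤ (u (tp ε) (xp ε) - ((1 - lam) * w (tp ε) (yp ε) + lam * a)
          - θ * (‖xp ε‖ ^ (2 * γ + 2) + ‖yp ε‖ ^ (2 * γ + 2)) + β * tp ε - lam / tp ε)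
        - (u tbar xbar - ((1 - lam) * w tbar xbar + lam * a)
          - θ * (‖xbar‖ ^ (2 * γ + 2) + ‖xbar‖ ^ (2 * γ + 2)) + β * tbar - lam / tbar) := by
    intro ε hε
    have h := hmax ε hε tbar ⟨htb0, htbT.le⟩ xbar xbar hxbar.le hxbar.le
    simp only [Phi, sub_self, norm_zero, zero_pow h2γ, add_zero, zero_add, mul_zero] at h
    linarith
  -- bounds for u and w on the compact set
  have hK : IsCompact ((Icc (0:ℝ) T) ×ˢ (Metric.closedBall (0 : EuclideanSpace ℝ (Fin k)) R)) :=
    isCompact_Icc.prod (isCompact_closedBall _ _)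
  have hsub : ((Icc (0:ℝ) T) ×ˢ (Metric.closedBall (0 : EuclideanSpace ℝ (Fin k)) R))
      ⊆ (Icc (0:ℝ) T) ×ˢ (univ : Set (EuclideanSpace ℝ (Fin k))) :=
    prod_mono Subset.rfl (subset_univ _)
  obtain ⟨Cu, hCu⟩ := hK.exists_bound_of_continuousOn (hu.mono hsub)
  obtain ⟨Cw, hCw⟩ := hK.exists_bound_of_continuousOn (hw.mono hsub)
  have hmemK : ∀ ε > (0:ℝ), ((tp ε, xp ε) :
      ℝ × EuclideanSpace ℝ (Fin k)) ∈ (Icc (0:ℝ) T)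
        ×ˢ (Metric.closedBall (0 : EuclideanSpace ℝ (Fin k)) R) := fun ε hε =>
    ⟨⟨(htp ε hε).1.le, (htp ε hε).2⟩, by simpa [mem_closedBall_zero_iff] using hxp ε hε⟩
  have hmemK' : ∀ ε > (0:ℝ), ((tp ε, yp ε) :
      ℝ × EuclideanSpace ℝ (Fin k)) ∈ (Icc (0:ℝ) T)
        ×ˢ (Metric.closedBall (0 : EuclideanSpace ℝ (Fin k)) R) := fun ε hε =>
    ⟨⟨(htp ε hε).1.le, (htp ε hε).2⟩, by simpa [mem_closedBall_zero_iff] using hyp ε hε⟩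
  set Fbar : ℝ := u tbar xbar - ((1 - lam) * w tbar xbar + lam * a)
      - θ * (‖xbar‖ ^ (2 * γ + 2) + ‖xbar‖ ^ (2 * γ + 2)) + β * tbar - lam / tbar with hFbar
  set M : ℝ := Cu + (1 - lam) * Cw + lam * |a| + β * T - Fbar with hM
  -- uniform bound on the penalization term
  have hQM : ∀ ε > (0:ℝ),
      (1 / (2 * ε)) * (‖xp ε - yp ε‖ ^ (2 * γ) + ‖xp ε - xbar‖ ^ (2 * γ)
        + (tp ε - tbar) ^ (2 * γ)) ≤ M := by
    intro ε hε
    have h1 := key ε hε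
    have hub : u (tp ε) (xp ε) ≤ Cu :=
      (abs_le.mp (by simpa [Real.norm_eq_abs] using hCu _ (hmemK ε hε))).2
    have hwb : -Cw ≤ w (tp ε) (yp ε) :=
      (abs_le.mp (by simpa [Real.norm_eq_abs] using hCw _ (hmemK' ε hε))).1
    have hθterm : 0 ≤ θ * (‖xp ε‖ ^ (2 * γ + 2) + ‖yp ε‖ ^ (2 * γ + 2)) := by positivity
    have hβterm : β * tp ε ≤ β * T := mul_le_mul_of_nonneg_left (htp ε hε).2 hβ0.le
    have hdivterm : 0 ≤ lam / tp ε := div_nonneg hlam0.le (htp ε hε).1.le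
    have hla : -(lam * a) ≤ lam * |a| := by
      have : -a ≤ |a| := neg_le_abs a
      nlinarith [hlam0.le]
    have hwterm : -((1 - lam) * w (tp ε) (yp ε)) ≤ (1 - lam) * Cw := by nlinarith
    rw [hM]
    linarith
  refine ⟨⟨M, ?_⟩, ?_⟩
  · filter_upwards [self_mem_nhdsWithin] with ε hε
    exact hQM ε hε
  -- the sum S ε tends to 0
  have hSnn : ∀ ε : ℝ, 0 ≤ ‖xp ε - yp ε‖ ^ (2 * γ) ∧ 0 ≤ ‖xp ε - xbar‖ ^ (2 * γ)
      ∧ 0 ≤ (tp ε - tbar) ^ (2 * γ) := fun ε =>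
    ⟨by positivity, by positivity, Even.pow_nonneg (even_two_mul γ) _⟩
  have hid : Tendsto (fun ε : ℝ => ε) (𝓝[>] (0:ℝ)) (𝓝 0) :=
    tendsto_id.mono_left nhdsWithin_le_nhds
  have hlin : Tendsto (fun ε : ℝ => 2 * ε * M) (𝓝[>] (0:ℝ)) (𝓝 0) := by
    simpa using (hid.const_mul 2).mul_const M
  have hS0 : Tendsto (fun ε => ‖xp ε - yp ε‖ ^ (2 * γ) + ‖xp ε - xbar‖ ^ (2 * γ)
      + (tp ε - tbar) ^ (2 * γ)) (𝓝[>] (0:ℝ)) (𝓝 0) := by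
    apply squeeze_zero' _ _ hlin
    · filter_upwards with ε
      obtain ⟨ha, hb, hc⟩ := hSnn ε
      linarith
    · filter_upwards [self_mem_nhdsWithin] with ε (hε : (0:ℝ) < ε)
      have h := hQM ε hε
      have h2ε : (0:ℝ) < 2 * ε := by linarith
      rw [one_div, inv_mul_le_iff₀ h2ε] at h
      linarith
  -- each summand tends to 0
  have hterm1 : Tendsto (fun ε => ‖xp ε - yp ε‖ ^ (2 * γ)) (𝓝[>] (0:ℝ)) (𝓝 0) :=
    squeeze_zero' (by filter_upwards with ε; exact (hSnn ε).1)
      (by filter_upwards with ε; obtain ⟨ha, hb, hc⟩ := hSnn ε; linarith) hS0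
  have hterm2 : Tendsto (fun ε => ‖xp ε - xbar‖ ^ (2 * γ)) (𝓝[>] (0:ℝ)) (𝓝 0) :=
    squeeze_zero' (by filter_upwards with ε; exact (hSnn ε).2.1)
      (by filter_upwards with ε; obtain ⟨ha, hb, hc⟩ := hSnn ε; linarith) hS0
  have hterm3 : Tendsto (fun ε => (tp ε - tbar) ^ (2 * γ)) (𝓝[>] (0:ℝ)) (𝓝 0) :=
    squeeze_zero' (by filter_upwards with ε; exact (hSnn ε).2.2)
      (by filter_upwards with ε; obtain ⟨ha, hb, hc⟩ := hSnn ε; linarith) hS0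
  -- from f^(2γ) → 0 and f ≥ 0, deduce f → 0
  have haux : ∀ f : ℝ → ℝ, (∀ ε, 0 ≤ f ε) →
      Tendsto (fun ε => f ε ^ (2 * γ)) (𝓝[>] (0:ℝ)) (𝓝 0) →
      Tendsto f (𝓝[>] (0:ℝ)) (𝓝 0) := by
    intro f h0 h
    rw [Metric.tendsto_nhds]
    intro δ hδ
    have hδn : (0:ℝ) < δ ^ (2 * γ) := by positivity
    filter_upwards [h.eventually (eventually_lt_nhds hδn)] with ε h2
    rw [Real.dist_eq, sub_zero, abs_of_nonneg (h0 ε)]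
    by_contra hc
    push_neg at hc
    exact absurd h2 (not_lt.mpr (pow_le_pow_left₀ hδ.le hc _))
  have h1 : Tendsto (fun ε => ‖xp ε - yp ε‖) (𝓝[>] (0:ℝ)) (𝓝 0) :=
    haux _ (fun ε => norm_nonneg _) hterm1
  have h2 : Tendsto (fun ε => ‖xp ε - xbar‖) (𝓝[>] (0:ℝ)) (𝓝 0) :=
    haux _ (fun ε => norm_nonneg _) hterm2
  have h3 : Tendsto tp (𝓝[>] (0:ℝ)) (𝓝 tbar) := by
    have habs : Tendsto (fun ε => |tp ε - tbar|) (𝓝[>] (0:ℝ)) (𝓝 0) := by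
      apply haux _ (fun ε => abs_nonneg _)
      have heq : ∀ ε : ℝ, |tp ε - tbar| ^ (2 * γ) = (tp ε - tbar) ^ (2 * γ) := fun ε =>
        Even.pow_abs (even_two_mul γ) _
      simpa [heq] using hterm3
    rw [tendsto_iff_dist_tendsto_zero]
    simpa [Real.dist_eq] using habs
  refine ⟨h1, h2, h3, ?_⟩
  -- convergence of the points
  have hx : Tendsto xp (𝓝[>] (0:ℝ)) (𝓝 xbar) := by
    rw [tendsto_iff_norm_sub_tendsto_zero]; exact h2
  have hy : Tendsto yp (𝓝[>] (0:ℝ)) (𝓝 xbar) := by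
    rw [tendsto_iff_norm_sub_tendsto_zero]
    apply squeeze_zero' (Eventually.of_forall fun ε => norm_nonneg _)
      (Eventually.of_forall fun ε => ?_) (by simpa using h1.add h2)
    calc ‖yp ε - xbar‖ ≤ ‖yp ε - xp ε‖ + ‖xp ε - xbar‖ :=
          norm_sub_le_norm_sub_add_norm_sub _ _ _
      _ = ‖xp ε - yp ε‖ + ‖xp ε - xbar‖ := by rw [norm_sub_rev]
  -- continuity: u and w evaluated along the maximizers
  have hmembar : ((tbar, xbar) : ℝ × EuclideanSpace ℝ (Fin k))
      ∈ (Icc (0:ℝ) T) ×ˢ (univ : Set (EuclideanSpace ℝ (Fin k))) :=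
    ⟨⟨htb0.le, htbT.le⟩, mem_univ _⟩
  have hpairx : Tendsto (fun ε => ((tp ε, xp ε) : ℝ × EuclideanSpace ℝ (Fin k)))
      (𝓝[>] (0:ℝ)) (𝓝[(Icc (0:ℝ) T) ×ˢ (univ : Set (EuclideanSpace ℝ (Fin k)))] (tbar, xbar)) := by
    rw [tendsto_nhdsWithin_iff]
    refine ⟨h3.prodMk_nhds hx, ?_⟩
    filter_upwards [self_mem_nhdsWithin] with ε hε
    exact ⟨⟨(htp ε hε).1.le, (htp ε hε).2⟩, mem_univ _⟩
  have hpairy : Tendsto (fun ε => ((tp ε, yp ε) : ℝ × EuclideanSpace ℝ (Fin k)))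
      (𝓝[>] (0:ℝ)) (𝓝[(Icc (0:ℝ) T) ×ˢ (univ : Set (EuclideanSpace ℝ (Fin k)))] (tbar, xbar)) := by
    rw [tendsto_nhdsWithin_iff]
    refine ⟨h3.prodMk_nhds hy, ?_⟩
    filter_upwards [self_mem_nhdsWithin] with ε hε
    exact ⟨⟨(htp ε hε).1.le, (htp ε hε).2⟩, mem_univ _⟩
  have hut : Tendsto (fun ε => u (tp ε) (xp ε)) (𝓝[>] (0:ℝ)) (𝓝 (u tbar xbar)) :=
    ((hu _ hmembar).tendsto).comp hpairx
  have hwt : Tendsto (fun ε => w (tp ε) (yp ε)) (𝓝[>] (0:ℝ)) (𝓝 (w tbar xbar)) :=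
    ((hw _ hmembar).tendsto).comp hpairy
  have hxn : Tendsto (fun ε => ‖xp ε‖ ^ (2 * γ + 2)) (𝓝[>] (0:ℝ)) (𝓝 (‖xbar‖ ^ (2 * γ + 2))) :=
    hx.norm.pow _
  have hyn : Tendsto (fun ε => ‖yp ε‖ ^ (2 * γ + 2)) (𝓝[>] (0:ℝ)) (𝓝 (‖xbar‖ ^ (2 * γ + 2))) :=
    hy.norm.pow _
  have hdiv : Tendsto (fun ε => lam / tp ε) (𝓝[>] (0:ℝ)) (𝓝 (lam / tbar)) :=
    tendsto_const_nhds.div h3 (ne_of_gt htb0)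
  -- convergence of the unpenalized part
  have hF : Tendsto (fun ε => (u (tp ε) (xp ε) - ((1 - lam) * w (tp ε) (yp ε) + lam * a)
      - θ * (‖xp ε‖ ^ (2 * γ + 2) + ‖yp ε‖ ^ (2 * γ + 2)) + β * tp ε - lam / tp ε) - Fbar)
      (𝓝[>] (0:ℝ)) (𝓝 0) := by
    rw [hFbar]
    have hcomb := ((((hut.sub (((tendsto_const_nhds : Tendsto (fun _ : ℝ => (1 - lam)) (𝓝[>] (0:ℝ)) (𝓝 (1 - lam))).mul hwt).add
      (tendsto_const_nhds : Tendsto (fun _ : ℝ => lam * a) _ _))).sub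
      ((tendsto_const_nhds : Tendsto (fun _ : ℝ => θ) _ _).mul (hxn.add hyn))).add
      ((tendsto_const_nhds : Tendsto (fun _ : ℝ => β) _ _).mul h3)).sub hdiv).sub
      (tendsto_const_nhds :
        Tendsto (fun _ : ℝ => u tbar xbar - ((1 - lam) * w tbar xbar + lam * a)
          - θ * (‖xbar‖ ^ (2 * γ + 2) + ‖xbar‖ ^ (2 * γ + 2)) + β * tbar - lam / tbar)
          (𝓝[>] (0:ℝ)) (𝓝 _))
    simpa using hcomb
  -- final squeeze
  apply squeeze_zero' _ _ hF
  · filter_upwards [self_mem_nhdsWithin] with ε (hε : (0:ℝ) < ε)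
    obtain ⟨ha, hb, hc⟩ := hSnn ε
    positivity
  · filter_upwards [self_mem_nhdsWithin] with ε hε
    exact key ε hε
end
end
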